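/- arXiv:1105.3238 — 3 statements merged into one kernel-verified Lean document; each statement's English description precedes it below -/
import Mathlib

section
/- (Linusson-type theorem, planar case) Let C be the square conv{(±1,0),(0,±1)} embedded as a 2-dimensional section of a 3-simplex T (i.e., C = T ∩ H for a plane H, with the four vertices of C lying in the interior of edges of T). Then there is no affine form w : T → [0,1] whose restriction to C equals a given nonconstant extreme form v of Ω(C) (i.e., a form v attaining both 0 and 1 on C along two opposite edges), whenever the 0-level and 1-level planes of any affine extension of v necessarily cut the interior of T. -/
open Set

def IsAffineOn {n : ℕ} (C : Set (Fin n → ℝ)) (f : C → ℝ) : Prop :=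
  ∀ (x y : C) (t : ℝ), t ∈ Set.Icc (0:ℝ) 1 →
    ∀ h : t • (x : Fin n → ℝ) + (1 - t) • (y : Fin n → ℝ) ∈ C,
      f ⟨_, h⟩ = t * f x + (1 - t) * f y

def OmegaSet {n : ℕ} (C : Set (Fin n → ℝ)) : Set (C → ℝ) :=
  {f | IsAffineOn C f ∧ ∀ x : C, f x ∈ Set.Icc (0:ℝ) 1}

/-!
The midpoint of the edge `ca` of `T` lies on the edge of `C` where `v = 0`, and the midpoint
of the edge `cd` lies on the edge where `v = 1`. An affine `w ≥ 0` vanishing at the midpoint of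
a segment vanishes at both ends, so `w c = 0`; applied to `1 - w`, the same argument gives
`w c = 1`.
-/

namespace OmegaSet

variable {n : ℕ} {C : Set (Fin n → ℝ)} {f : C → ℝ}

theorem one_sub_mem (hf : f ∈ OmegaSet C) : (fun x => 1 - f x) ∈ OmegaSet C := by
  refine ⟨fun x y t ht h => ?_, fun x => ?_⟩
  · show 1 - f _ = _
    rw [hf.1 x y t ht h]
    ring
  · obtain ⟨h0, h1⟩ := hf.2 x
    constructor <;> linarith

theorem eq_zero_of_combo_eq_zero (hf : f ∈ OmegaSet C) (x y : C) {t : ℝ} (ht : t ∈ Ioc 0 1)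
    (h : t • (x : Fin n → ℝ) + (1 - t) • (y : Fin n → ℝ) ∈ C) (hzero : f ⟨_, h⟩ = 0) :
    f x = 0 := by
  rw [hf.1 x y t ⟨ht.1.le, ht.2⟩ h] at hzero
  have hx : 0 ≤ t * f x := mul_nonneg ht.1.le (hf.2 x).1
  have hy : 0 ≤ (1 - t) * f y := mul_nonneg (sub_nonneg.2 ht.2) (hf.2 y).1
  exact ((mul_eq_zero.1 ((add_eq_zero_iff_of_nonneg hx hy).1 hzero).1).resolve_left ht.1.ne')

theorem eq_one_of_combo_eq_one (hf : f ∈ OmegaSet C) (x y : C) {t : ℝ} (ht : t ∈ Ioc 0 1)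
    (h : t • (x : Fin n → ℝ) + (1 - t) • (y : Fin n → ℝ) ∈ C) (hone : f ⟨_, h⟩ = 1) :
    f x = 1 :=
  (sub_eq_zero.1 <|
    eq_zero_of_combo_eq_zero (one_sub_mem hf) x y ht h (sub_eq_zero.2 hone.symm)).symm

end OmegaSet

/-- Linusson-type theorem, planar case: let `T` be the tetrahedron with
vertices `a=(1,1,1)`, `b=(1,-1,-1)`, `c=(-1,1,-1)`, `d=(-1,-1,1)`, and let `C = T ∩ {z=0}`
be the square section `conv{(±1,0,0),(0,±1,0)}`. The extreme form `v` of `Ω(C)` given by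
`v(x,y,0) = (1 - x - y)/2` (which is `0` on one edge of `C` and `1` on the opposite edge)
admits no affine extension `w : T → [0,1]`: no `w ∈ Ω(T)` restricts to `v` on `C`. -/
theorem no_extension_of_extreme_form_of_section
    (T C : Set (Fin 3 → ℝ))
    (hT : T = convexHull ℝ
      {(![1,1,1] : Fin 3 → ℝ), ![1,-1,-1], ![-1,1,-1], ![-1,-1,1]})
    (hC : C = T ∩ {x | x 2 = 0}) :
    ¬ ∃ w ∈ OmegaSet T, ∀ x : T, (x : Fin 3 → ℝ) ∈ C →
        w x = (1 - (x : Fin 3 → ℝ) 0 - (x : Fin 3 → ℝ) 1) / 2 := by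
  rintro ⟨w, hw, hv⟩
  subst hC
  have hconv : Convex ℝ T := hT ▸ convex_convexHull ℝ _
  have vertex_mem {p : Fin 3 → ℝ} (hp : p ∈ ({![1,1,1], ![1,-1,-1], ![-1,1,-1], ![-1,-1,1]} :
      Set (Fin 3 → ℝ))) : p ∈ T := hT ▸ subset_convexHull ℝ _ hp
  have ha : ![1,1,1] ∈ T := vertex_mem (by simp)
  have hc : ![-1,1,-1] ∈ T := vertex_mem (by simp)
  have hd : ![-1,-1,1] ∈ T := vertex_mem (by simp)
  have half_mem : (1 / 2 : ℝ) ∈ Ioc 0 1 := by norm_num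
  have midpoint_mem {p q : Fin 3 → ℝ} (hp : p ∈ T) (hq : q ∈ T) :
      (1 / 2 : ℝ) • p + (1 - 1 / 2 : ℝ) • q ∈ T :=
    hconv hp hq (by norm_num) (by norm_num) (by ring)
  have hca := midpoint_mem hc ha
  have hcd := midpoint_mem hc hd
  have zero_at_c := OmegaSet.eq_zero_of_combo_eq_zero hw ⟨_, hc⟩ ⟨_, ha⟩ half_mem hca <| by
    rw [hv _ ⟨hca, by simp; norm_num⟩]; norm_num
  have one_at_c := OmegaSet.eq_one_of_combo_eq_one hw ⟨_, hc⟩ ⟨_, hd⟩ half_mem hcd <| by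
    rw [hv _ ⟨hcd, by simp; norm_num⟩]; norm_num
  exact zero_ne_one (zero_at_c.symm.trans one_at_c)
end

section
/- If f : T → C is an injective affine map from a simplex T onto a convex set C with the property that every affine form ω : C → [0,1] pulls back from some affine form on T attaining the same values (i.e., the pullback Ω-correspondence is surjective onto Ω(C)), and additionally every extreme form of Ω(C) has a preimage, then C is itself a simplex. -/
open Set

/-! Barycentric coordinates identify `T` with the standard simplex `Δ ⊆ ℝᵏ` and `C` with a compact
convex `D ⊆ Δ`. Affine functions on `Δ` are the maps `x ↦ c ⬝ᵥ x`, so the hypothesis says that each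
`[0,1]`-valued affine function on `D` is such a map with `c ∈ [0,1]ᵏ`. If that map is `1` at
`u ∈ D`, then `c = 1` on the support of `u`, so it dominates the mass `σᵤ x = ∑_{j ∈ supp u} x_j`.
Consequently `D = Δ ∩ aff D` (a separating form would otherwise exceed `1` somewhere on `Δ`), and
for an extreme point `u` the form `σᵤ - t (x_i - u_i σᵤ)` is admissible for small `|t|`, which
forces `x_i = u_i σᵤ x` on `D` for `i ∈ supp u`. So every `x ∈ D` is a convex combination of `u`
and a point of `D` off `supp u`, and distinct extreme points have disjoint supports. Hence they
are finitely many and linearly independent, and `D`, hence `C`, is their convex hull. -/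

open Function Filter Topology

lemma Set.finite_of_pairwise_disjoint_support {ι R : Type*} [Finite ι] [Zero R]
    {s : Set (ι → R)} (h0 : 0 ∉ s) (hs : s.Pairwise (Disjoint on support)) :
    s.Finite := by
  refine Set.Finite.of_finite_image (f := support) (Set.toFinite _)
    fun u hu v hv huv => by_contra fun hne => h0 ?_
  have := hs hu hv hne
  rw [onFun, huv, disjoint_self, bot_eq_empty, support_eq_empty_iff] at this
  exact this ▸ hv

lemma linearIndependent_of_pairwise_disjoint_support {ι κ R : Type*} [Ring R] [NoZeroDivisors R]
    {q : κ → ι → R} (h0 : ∀ r, q r ≠ 0)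
    (hq : Pairwise (Disjoint on fun r => support (q r))) : LinearIndependent R q := by
  classical
  refine linearIndependent_iff'.2 fun s g hg r hr => ?_
  obtain ⟨j, hj⟩ := Function.ne_iff.1 (h0 r)
  have hgj := congrFun hg j
  rw [Finset.sum_apply, Finset.sum_eq_single r (fun r' _ hr' => ?_) (fun h => (h hr).elim)] at hgj
  · exact (mul_eq_zero.1 hgj).resolve_right hj
  · have : q r' j = 0 := notMem_support.1 fun h => Set.disjoint_left.1 (hq hr') h hj
    simp [this]

section StdSimplex

variable {ι : Type*} [Fintype ι]

noncomputable def supportIndicator (u : ι → ℝ) : ι → ℝ := (support u).indicator 1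

omit [Fintype ι] in
@[simp]
lemma supportIndicator_apply (u : ι → ℝ) (j : ι) :
    supportIndicator u j = if u j = 0 then 0 else 1 := by
  by_cases h : u j = 0 <;> simp [supportIndicator, h]

omit [Fintype ι] in
lemma supportIndicator_mem_Icc (u : ι → ℝ) : supportIndicator u ∈ Icc 0 1 := by
  constructor <;> intro j <;> by_cases h : u j = 0 <;> simp [h]

omit [Fintype ι] in
lemma supportIndicator_mul_self (u : ι → ℝ) : supportIndicator u * u = u := by
  ext j; by_cases h : u j = 0 <;> simp [h]

lemma supportIndicator_dotProduct_self (u : ι → ℝ) :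
    supportIndicator u ⬝ᵥ u = ∑ j, u j := by
  simp only [dotProduct]
  exact Finset.sum_congr rfl fun j _ => congrFun (supportIndicator_mul_self u) j

lemma one_sub_supportIndicator_dotProduct {u x : ι → ℝ} (hx : x ∈ stdSimplex ℝ ι) :
    1 - supportIndicator u ⬝ᵥ x = (1 - supportIndicator u) ⬝ᵥ x := by
  rw [sub_dotProduct, one_dotProduct, hx.2]

lemma dotProduct_mem_Icc_of_mem_stdSimplex {c x : ι → ℝ} (hc : c ∈ Icc 0 1)
    (hx : x ∈ stdSimplex ℝ ι) : c ⬝ᵥ x ∈ Icc 0 1 :=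
  ⟨dotProduct_nonneg_of_nonneg hc.1 hx.1, by
    simpa [one_dotProduct, hx.2] using dotProduct_le_dotProduct_of_nonneg_right hc.2 hx.1⟩

lemma supportIndicator_dotProduct_le {c u x : ι → ℝ} (hc : c ∈ Icc 0 1)
    (hu : u ∈ stdSimplex ℝ ι) (hcu : c ⬝ᵥ u = 1) (hx : 0 ≤ x) :
    supportIndicator u ⬝ᵥ x ≤ c ⬝ᵥ x := by
  have hsum : ∑ j, (1 - c j) * u j = 0 := by
    simp only [sub_mul, one_mul, Finset.sum_sub_distrib, hu.2]
    rw [← hcu, dotProduct]; ring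
  have hc1 : ∀ j, u j ≠ 0 → c j = 1 := fun j hj => by
    have := (Finset.sum_eq_zero_iff_of_nonneg fun j _ =>
      mul_nonneg (sub_nonneg.2 (hc.2 j)) (hu.1 j)).1 hsum j (Finset.mem_univ j)
    exact (sub_eq_zero.1 ((mul_eq_zero.1 this).resolve_right hj)).symm
  refine Finset.sum_le_sum fun j _ => ?_
  by_cases h : u j = 0
  · simpa [h] using mul_nonneg (hc.1 j) (hx j)
  · simp [h, hc1 j h]

lemma sum_eq_zero_of_mem_vectorSpan {D : Set (ι → ℝ)} (hDs : D ⊆ stdSimplex ℝ ι)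
    {d : ι → ℝ} (hd : d ∈ vectorSpan ℝ D) : ∑ j, d j = 0 := by
  rw [← one_dotProduct]
  refine Submodule.span_induction ?_ (by simp) (fun _ _ _ _ h h' => by simp [dotProduct_add, h, h'])
    (fun a _ _ h => by simp [dotProduct_smul, h]) hd
  rintro _ ⟨x, hx, y, hy, rfl⟩
  simp [vsub_eq_sub, dotProduct_sub, one_dotProduct, (hDs hx).2, (hDs hy).2]

lemma eventually_add_smul_mem_stdSimplex {u d : ι → ℝ} (hu : u ∈ stdSimplex ℝ ι)
    (hd : ∑ j, d j = 0) (hdu : support d ⊆ support u) :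
    ∀ᶠ t in 𝓝 (0 : ℝ), u + t • d ∈ stdSimplex ℝ ι := by
  have hsum : ∀ t : ℝ, ∑ j, (u + t • d) j = 1 := fun t => by
    simp [Finset.sum_add_distrib, ← Finset.mul_sum, hd, hu.2]
  have hnonneg : ∀ j, ∀ᶠ t in 𝓝 (0 : ℝ), 0 ≤ u j + t * d j := fun j => by
    by_cases h : u j = 0
    · have : d j = 0 := notMem_support.1 fun hj => hdu hj h
      simp [h, this]
    · have hcont : Tendsto (fun t : ℝ => u j + t * d j) (𝓝 0) (𝓝 (u j)) := by
        simpa using ((tendsto_id (x := 𝓝 (0 : ℝ))).mul_const (d j)).const_add (u j)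
      exact hcont.eventually (eventually_ge_nhds (lt_of_le_of_ne (hu.1 j) (Ne.symm h)))
  filter_upwards [eventually_all.2 hnonneg] with t ht
  exact ⟨fun j => by simpa using ht j, hsum t⟩

/-- Affine functions on the standard simplex are exactly the maps `x ↦ c ⬝ᵥ x`, and those with
values in `[0,1]` are the ones with `c ∈ [0,1]^ι`; so this says that every `[0,1]`-valued affine
function on `D` extends to a `[0,1]`-valued affine function on the simplex. -/
def AffineFormsExtend (D : Set (ι → ℝ)) : Prop :=
  ∀ c : ι → ℝ, (∀ x ∈ D, c ⬝ᵥ x ∈ Icc (0 : ℝ) 1) →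
    ∃ c' ∈ Icc (0 : ι → ℝ) 1, ∀ x ∈ D, c' ⬝ᵥ x = c ⬝ᵥ x

lemma dotProduct_eqOn_affineSpan {D : Set (ι → ℝ)} {c c' : ι → ℝ}
    (h : ∀ x ∈ D, c' ⬝ᵥ x = c ⬝ᵥ x) {z : ι → ℝ} (hz : z ∈ affineSpan ℝ D) :
    c' ⬝ᵥ z = c ⬝ᵥ z :=
  LinearMap.eqOn_span (f := dotProductBilin ℝ ℝ c') (g := dotProductBilin ℝ ℝ c) h
    (affineSpan_subset_span hz)

lemma AffineFormsExtend.stdSimplex_inter_affineSpan_subset {D : Set (ι → ℝ)}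
    (hD : AffineFormsExtend D) (hDs : D ⊆ stdSimplex ℝ ι) (hconv : Convex ℝ D)
    (hcl : IsClosed D) : stdSimplex ℝ ι ∩ affineSpan ℝ D ⊆ D := by
  classical
  rintro z ⟨hzΔ, hzD⟩
  by_contra hz
  obtain ⟨f, s, hfD, hfz⟩ := geometric_hahn_banach_closed_point hconv hcl hz
  obtain ⟨m, hm⟩ : BddBelow (f '' D) :=
    ((isCompact_stdSimplex ℝ ι).of_isClosed_subset hcl hDs).bddBelow_image
      f.continuous.continuousOn
  obtain ⟨a, ha⟩ := (affineSpan_nonempty ℝ).1 ⟨z, hzD⟩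
  have hms : m < s := (hm ⟨a, ha, rfl⟩).trans_lt (hfD a ha)
  set c : ι → ℝ := (s - m)⁻¹ • ((dotProductEquiv ℝ ι).symm f.toLinearMap - m • 1)
  have hc : ∀ x ∈ stdSimplex ℝ ι, c ⬝ᵥ x = (f x - m) / (s - m) := by
    intro x hx
    have hf : (dotProductEquiv ℝ ι).symm f.toLinearMap ⬝ᵥ x = f x := by
      rw [← dotProductEquiv_apply_apply, LinearEquiv.apply_symm_apply]; rfl
    simp only [c, smul_dotProduct, sub_dotProduct, one_dotProduct, hx.2, hf, smul_eq_mul,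
      mul_one, div_eq_inv_mul]
  have hcD : ∀ x ∈ D, c ⬝ᵥ x ∈ Icc (0 : ℝ) 1 := by
    intro x hx
    have h1 : m ≤ f x := hm ⟨x, hx, rfl⟩
    have h2 := hfD x hx
    rw [hc x (hDs hx), mem_Icc, div_le_one (by linarith)]
    exact ⟨div_nonneg (by linarith) (by linarith), by linarith⟩
  obtain ⟨c', hc', hc'D⟩ := hD c hcD
  have hz1 := (dotProduct_mem_Icc_of_mem_stdSimplex hc' hzΔ).2
  rw [dotProduct_eqOn_affineSpan hc'D hzD, hc z hzΔ, div_le_one (by linarith)] at hz1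
  linarith

lemma eq_zero_of_mem_vectorSpan_of_support_subset {D : Set (ι → ℝ)} (hDs : D ⊆ stdSimplex ℝ ι)
    (hΔ : stdSimplex ℝ ι ∩ affineSpan ℝ D ⊆ D) {u d : ι → ℝ} (hu : u ∈ D.extremePoints ℝ)
    (hd : d ∈ vectorSpan ℝ D) (hdu : support d ⊆ support u) : d = 0 := by
  have hline : ∀ t : ℝ, u + t • d ∈ affineSpan ℝ D := fun t => by
    simpa [vadd_eq_add, add_comm] using AffineSubspace.vadd_mem_of_mem_direction
      (by rw [direction_affineSpan]; exact Submodule.smul_mem _ t hd) (mem_affineSpan ℝ hu.1)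
  have hnear : ∀ᶠ t in 𝓝 (0 : ℝ), u + t • d ∈ D ∧ u + (-t) • d ∈ D := by
    have h := eventually_add_smul_mem_stdSimplex (hDs hu.1)
      (sum_eq_zero_of_mem_vectorSpan hDs hd) hdu
    have hneg := (continuous_neg.tendsto' (0 : ℝ) 0 neg_zero).eventually h
    filter_upwards [h, hneg] with t ht htn
    exact ⟨hΔ ⟨ht, hline t⟩, hΔ ⟨htn, hline (-t)⟩⟩
  have hnear' : ∀ᶠ t in 𝓝[≠] (0 : ℝ), (u + t • d ∈ D ∧ u + (-t) • d ∈ D) ∧ t ≠ 0 :=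
    (hnear.filter_mono nhdsWithin_le_nhds).and self_mem_nhdsWithin
  obtain ⟨t, ⟨htD, htD'⟩, ht0⟩ := hnear'.exists
  have hseg : u ∈ openSegment ℝ (u + t • d) (u + (-t) • d) :=
    ⟨1 / 2, 1 / 2, by norm_num, by norm_num, by norm_num, by
      simp only [smul_add, smul_smul, neg_smul, smul_neg]; module⟩
  simpa [ht0] using hu.2 htD htD' hseg

lemma exists_dotProduct_eq_of_support_subset {V : Submodule ℝ (ι → ℝ)} {s : Set ι}
    (hV : ∀ d ∈ V, support d ⊆ s → d = 0) (a : ι → ℝ) :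
    ∃ β : ι → ℝ, (∀ j ∈ s, β j = 0) ∧ ∀ d ∈ V, a ⬝ᵥ d = β ⬝ᵥ d := by
  classical
  set m : ι → ℝ := sᶜ.indicator 1
  set mask := (LinearMap.mulLeft ℝ m).domRestrict V
  have hker : LinearMap.ker mask = ⊥ := by
    refine LinearMap.ker_eq_bot'.2 fun d hd => Subtype.ext (hV d d.2 fun j hj => ?_)
    by_contra hjs
    have := congrFun hd j
    simp [mask, m, hjs] at this
    exact hj this
  obtain ⟨g, hg⟩ := mask.exists_leftInverse_of_injective hker
  set γ := (dotProductEquiv ℝ ι).symm ((dotProductBilin ℝ ℝ a) ∘ₗ V.subtype ∘ₗ g)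
  refine ⟨m * γ, fun j hj => by simp [m, hj], fun d hd => ?_⟩
  have hgd : g (mask ⟨d, hd⟩) = ⟨d, hd⟩ := LinearMap.congr_fun hg _
  calc a ⬝ᵥ d = (dotProductBilin ℝ ℝ a ∘ₗ V.subtype ∘ₗ g) (mask ⟨d, hd⟩) := by simp [hgd]
    _ = (dotProductBilin ℝ ℝ a ∘ₗ V.subtype ∘ₗ g) (m * d) := rfl
    _ = γ ⬝ᵥ (m * d) := by rw [← dotProductEquiv_apply_apply, LinearEquiv.apply_symm_apply]
    _ = (m * γ) ⬝ᵥ d := by simp only [dotProduct, Pi.mul_apply]; congr 1; ext j; ring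

lemma AffineFormsExtend.dotProduct_eq_zero {D : Set (ι → ℝ)} (hD : AffineFormsExtend D)
    (hDs : D ⊆ stdSimplex ℝ ι) {u a : ι → ℝ} (hu : u ∈ D) {K : ℝ} (hK : 0 ≤ K)
    (hσ : ∀ x ∈ D, |a ⬝ᵥ x| ≤ supportIndicator u ⬝ᵥ x)
    (hoff : ∀ x ∈ D, |a ⬝ᵥ x| ≤ K * (1 - supportIndicator u ⬝ᵥ x)) :
    ∀ x ∈ D, a ⬝ᵥ x = 0 := by
  have hσu : supportIndicator u ⬝ᵥ u = 1 := by
    rw [supportIndicator_dotProduct_self, (hDs hu).2]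
  have hau : a ⬝ᵥ u = 0 := abs_nonpos_iff.1 (by simpa [hσu] using hoff u hu)
  set s := (K + 1)⁻¹
  have hs : 0 < s := by positivity
  have hs1 : s ≤ 1 := inv_le_one_of_one_le₀ (by linarith)
  have hsK : s * K ≤ 1 := by
    rw [inv_mul_le_iff₀ (by linarith)]; linarith
  have hneg : ∀ t : ℝ, |t| ≤ s → ∀ x ∈ D, t * (a ⬝ᵥ x) ≤ 0 := by
    intro t ht x hx
    -- `supportIndicator u - t • a` is admissible and is `1` at `u`, so it dominates `σᵤ`
    have hc : ∀ y ∈ D, (supportIndicator u - t • a) ⬝ᵥ y ∈ Icc (0 : ℝ) 1 := by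
      intro y hy
      have hσ1 := (dotProduct_mem_Icc_of_mem_stdSimplex (supportIndicator_mem_Icc u) (hDs hy)).2
      have hts : |t * (a ⬝ᵥ y)| ≤ s * |a ⬝ᵥ y| := by rw [abs_mul]; gcongr
      have h1 : s * |a ⬝ᵥ y| ≤ supportIndicator u ⬝ᵥ y :=
        (mul_le_of_le_one_left (abs_nonneg _) hs1).trans (hσ y hy)
      have h2 : s * |a ⬝ᵥ y| ≤ 1 - supportIndicator u ⬝ᵥ y :=
        calc s * |a ⬝ᵥ y| ≤ s * K * (1 - supportIndicator u ⬝ᵥ y) := by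
              rw [mul_assoc]; exact mul_le_mul_of_nonneg_left (hoff y hy) hs.le
          _ ≤ 1 - supportIndicator u ⬝ᵥ y := mul_le_of_le_one_left (by linarith) hsK
      rw [sub_dotProduct, smul_dotProduct, smul_eq_mul]
      constructor <;> linarith [le_abs_self (t * (a ⬝ᵥ y)), neg_abs_le (t * (a ⬝ᵥ y))]
    obtain ⟨c', hc', hc'D⟩ := hD _ hc
    have hc'u : c' ⬝ᵥ u = 1 := by
      rw [hc'D u hu, sub_dotProduct, smul_dotProduct, hau, hσu, smul_zero, sub_zero]
    have h := supportIndicator_dotProduct_le hc' (hDs hu) hc'u (hDs hx).1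
    rw [hc'D x hx, sub_dotProduct, smul_dotProduct, smul_eq_mul] at h
    linarith
  intro x hx
  have h1 := hneg s (abs_of_pos hs).le x hx
  have h2 := hneg (-s) (by rw [abs_neg, abs_of_pos hs]) x hx
  nlinarith

lemma abs_single_sub_smul_supportIndicator_dotProduct_le [DecidableEq ι] {u x : ι → ℝ} {i : ι}
    (hu : u ∈ stdSimplex ℝ ι) (hi : u i ≠ 0) (hx : 0 ≤ x) :
    |(Pi.single i 1 - u i • supportIndicator u) ⬝ᵥ x| ≤ supportIndicator u ⬝ᵥ x := by
  have hxi : x i ≤ supportIndicator u ⬝ᵥ x := by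
    simpa [hi, dotProduct] using Finset.single_le_sum (f := fun j => supportIndicator u j * x j)
      (fun j _ => mul_nonneg ((supportIndicator_mem_Icc u).1 j) (hx j)) (Finset.mem_univ i)
  have hσ : 0 ≤ supportIndicator u ⬝ᵥ x :=
    dotProduct_nonneg_of_nonneg (supportIndicator_mem_Icc u).1 hx
  have hui := mem_Icc_of_mem_stdSimplex hu i
  rw [sub_dotProduct, single_dotProduct, smul_dotProduct, smul_eq_mul, one_mul, abs_le]
  have hxi0 : 0 ≤ x i := hx i
  have h1 := mul_nonneg hσ (sub_nonneg.2 hui.2)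
  have h2 := mul_nonneg hui.1 hσ
  constructor <;> nlinarith

lemma abs_dotProduct_le_of_forall_ne_zero {u β x : ι → ℝ} (hβ : ∀ j, u j ≠ 0 → β j = 0)
    (hx : x ∈ stdSimplex ℝ ι) :
    |β ⬝ᵥ x| ≤ (∑ j, |β j|) * (1 - supportIndicator u ⬝ᵥ x) := by
  rw [one_sub_supportIndicator_dotProduct hx, dotProduct, dotProduct, Finset.mul_sum]
  refine (Finset.abs_sum_le_sum_abs _ _).trans (Finset.sum_le_sum fun j _ => ?_)
  rw [abs_mul, abs_of_nonneg (hx.1 j)]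
  by_cases h : u j = 0
  · simpa [h] using mul_le_mul_of_nonneg_right
      (Finset.single_le_sum (f := fun j => |β j|) (fun j _ => abs_nonneg _) (Finset.mem_univ j))
      (hx.1 j)
  · simp [h, hβ j h]

lemma AffineFormsExtend.supportIndicator_mul_eq_smul {D : Set (ι → ℝ)}
    (hD : AffineFormsExtend D) (hDs : D ⊆ stdSimplex ℝ ι)
    (hΔ : stdSimplex ℝ ι ∩ affineSpan ℝ D ⊆ D) {u x : ι → ℝ} (hu : u ∈ D.extremePoints ℝ)
    (hx : x ∈ D) : supportIndicator u * x = (supportIndicator u ⬝ᵥ x) • u := by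
  classical
  ext i
  by_cases hi : u i = 0
  · simp [hi]
  set a : ι → ℝ := Pi.single i 1 - u i • supportIndicator u
  obtain ⟨β, hβ, haβ⟩ := exists_dotProduct_eq_of_support_subset (a := a)
    fun d hd hdu => eq_zero_of_mem_vectorSpan_of_support_subset hDs hΔ hu hd hdu
  have hau : a ⬝ᵥ u = 0 := by
    simp [a, sub_dotProduct, smul_dotProduct, supportIndicator_dotProduct_self, (hDs hu.1).2]
  have hβu : β ⬝ᵥ u = 0 := Finset.sum_eq_zero fun j _ => by
    by_cases h : u j = 0
    · simp [h]
    · simp [hβ j h]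
  have haD : ∀ y ∈ D, a ⬝ᵥ y = β ⬝ᵥ y := fun y hy => by
    have := haβ (y - u) (vsub_mem_vectorSpan ℝ hy hu.1)
    rwa [dotProduct_sub, dotProduct_sub, hau, hβu, sub_zero, sub_zero] at this
  have hax := hD.dotProduct_eq_zero hDs hu.1 (a := a)
    (Finset.sum_nonneg fun j _ => abs_nonneg (β j))
    (fun y hy => abs_single_sub_smul_supportIndicator_dotProduct_le (hDs hu.1) hi (hDs hy).1)
    (fun y hy => haD y hy ▸ abs_dotProduct_le_of_forall_ne_zero hβ (hDs hy)) x hx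
  simp only [a, sub_dotProduct, single_dotProduct, smul_dotProduct, smul_eq_mul, one_mul] at hax
  simp [hi]
  linarith

lemma AffineFormsExtend.disjoint_support_of_mem_extremePoints {D : Set (ι → ℝ)}
    (hD : AffineFormsExtend D) (hDs : D ⊆ stdSimplex ℝ ι) (hconv : Convex ℝ D)
    (hcl : IsClosed D) {u v : ι → ℝ} (hu : u ∈ D.extremePoints ℝ) (hv : v ∈ D.extremePoints ℝ)
    (huv : u ≠ v) : Disjoint (support u) (support v) := by
  have hΔ := hD.stdSimplex_inter_affineSpan_subset hDs hconv hcl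
  have hvu := hD.supportIndicator_mul_eq_smul hDs hΔ hu hv.1
  set t := supportIndicator u ⬝ᵥ v
  set w := (1 - supportIndicator u) * v with hw_def
  have hvΔ := hDs hv.1
  have hsplit : v = t • u + w := by rw [hw_def, sub_mul, one_mul, hvu]; abel
  have hw0 : 0 ≤ w := fun j =>
    mul_nonneg (sub_nonneg.2 ((supportIndicator_mem_Icc u).2 j)) (hvΔ.1 j)
  have hwsum : ∑ j, w j = 1 - t := by
    rw [one_sub_supportIndicator_dotProduct hvΔ]; rfl
  obtain ⟨ht0, ht1⟩ : 0 ≤ t ∧ t ≤ 1 :=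
    dotProduct_mem_Icc_of_mem_stdSimplex (supportIndicator_mem_Icc u) hvΔ
  rcases ht0.eq_or_lt with ht0 | ht0
  · refine Set.disjoint_left.2 fun j hju hjv => hjv ?_
    simpa [mem_support.1 hju, ← ht0] using congrFun hvu j
  rcases ht1.eq_or_lt with ht1 | ht1
  · have hw : w = 0 := funext fun j => (Finset.sum_eq_zero_iff_of_nonneg fun j _ => hw0 j).1
      (by rw [hwsum, ht1, sub_self]) j (Finset.mem_univ j)
    exact (huv (by rw [hsplit, hw, ht1, one_smul, add_zero])).elim
  · -- `v` lies strictly between `u` and the normalised off-support part of `v`, which is in `D`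
    set y := (1 - t)⁻¹ • w
    have hyΔ : y ∈ stdSimplex ℝ ι :=
      ⟨fun j => mul_nonneg (inv_nonneg.2 (by linarith)) (hw0 j), by
        simp [y, ← Finset.mul_sum, hwsum, inv_mul_cancel₀ (by linarith : (1 : ℝ) - t ≠ 0)]⟩
    have hyD : y ∈ affineSpan ℝ D := by
      have hy : y = (t * (1 - t)⁻¹) • (v - u) + v := by
        rw [hsplit]
        match_scalars <;> field_simp <;> ring
      rw [hy]
      refine AffineSubspace.vadd_mem_of_mem_direction ?_ (mem_affineSpan ℝ hv.1)
      rw [direction_affineSpan]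
      exact Submodule.smul_mem _ _ (vsub_mem_vectorSpan ℝ hv.1 hu.1)
    have hseg : v ∈ openSegment ℝ u y := ⟨t, 1 - t, ht0, by linarith, by ring, by
      rw [smul_smul, mul_inv_cancel₀ (by linarith : (1 : ℝ) - t ≠ 0), one_smul, ← hsplit]⟩
    exact (huv (hv.2 hu.1 (hΔ ⟨hyΔ, hyD⟩) hseg)).elim

end StdSimplex

lemma IsAffineOn.map_sum {n : ℕ} {C : Set (Fin n → ℝ)} (hC : Convex ℝ C) {f : C → ℝ}
    (hf : IsAffineOn C f) {ι : Type*} (t : Finset ι) {w : ι → ℝ} (z : ι → C)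
    (hw₀ : ∀ i ∈ t, 0 ≤ w i) (hw₁ : ∑ i ∈ t, w i = 1)
    (h : ∑ i ∈ t, w i • (z i : Fin n → ℝ) ∈ C) : f ⟨_, h⟩ = ∑ i ∈ t, w i * f (z i) := by
  classical
  set W : (Fin n → ℝ) → ℝ := fun y => if hy : y ∈ C then f ⟨y, hy⟩ else 0
  have hW : ∀ y (hy : y ∈ C), W y = f ⟨y, hy⟩ := fun y hy => dif_pos hy
  have hcomb : ∀ ⦃x⦄, x ∈ C → ∀ ⦃y⦄, y ∈ C → ∀ ⦃a b : ℝ⦄, 0 ≤ a → 0 ≤ b → a + b = 1 →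
      W (a • x + b • y) = a • W x + b • W y := by
    intro x hx y hy a b ha hb hab
    obtain rfl : b = 1 - a := by linarith
    rw [hW _ (hC hx hy ha hb hab), hW x hx, hW y hy]
    exact hf ⟨x, hx⟩ ⟨y, hy⟩ a ⟨ha, by linarith⟩ _
  have hle := ConvexOn.map_sum_le ⟨hC, fun x hx y hy a b ha hb hab => (hcomb hx hy ha hb hab).le⟩
    hw₀ hw₁ fun i _ => (z i).2
  have hge := ConcaveOn.le_map_sum ⟨hC, fun x hx y hy a b ha hb hab => (hcomb hx hy ha hb hab).ge⟩
    hw₀ hw₁ fun i _ => (z i).2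
  rw [← hW _ h, le_antisymm hle hge]
  simp only [hW _ (z _).2, smul_eq_mul]

section Barycentric

variable {ι E : Type*} [Fintype ι] [AddCommGroup E] [Module ℝ E]

lemma convexHull_range_eq_image_stdSimplex (p : ι → E) :
    convexHull ℝ (range p) = Fintype.linearCombination ℝ p '' stdSimplex ℝ ι := by
  classical
  rw [← convexHull_rangle_single_eq_stdSimplex, LinearMap.image_convexHull, ← range_comp]
  congr
  ext i
  simp [Fintype.linearCombination_apply, Pi.single_apply]

lemma image_stdSimplex_inter_preimage_linearCombination {p : ι → E} {C : Set E}
    (hC : C ⊆ convexHull ℝ (range p)) :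
    Fintype.linearCombination ℝ p '' (stdSimplex ℝ ι ∩ Fintype.linearCombination ℝ p ⁻¹' C) =
      C := by
  rw [image_inter_preimage, ← convexHull_range_eq_image_stdSimplex, inter_eq_right.2 hC]

lemma AffineIndependent.eq_zero_of_linearCombination_eq_zero {p : ι → E}
    (hp : AffineIndependent ℝ p) {z : ι → ℝ} (hz : ∑ i, z i = 0)
    (h : Fintype.linearCombination ℝ p z = 0) : z = 0 := by
  funext i
  refine (affineIndependent_iff_of_fintype ℝ p).1 hp z hz ?_ i
  rw [Finset.weightedVSub_eq_linear_combination _ hz]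
  simpa [Fintype.linearCombination_apply] using h

lemma AffineIndependent.injOn_linearCombination {p : ι → E} (hp : AffineIndependent ℝ p) :
    InjOn (Fintype.linearCombination ℝ p) (stdSimplex ℝ ι) := fun x hx y hy h =>
  sub_eq_zero.1 <| hp.eq_zero_of_linearCombination_eq_zero
    (by simp [Finset.sum_sub_distrib, hx.2, hy.2]) (by rw [map_sub, h, sub_self])

lemma AffineIndependent.linearCombination_comp {κ : Type*} [Fintype κ] {p : ι → E}
    (hp : AffineIndependent ℝ p) {q : κ → ι → ℝ} (hq : LinearIndependent ℝ q)
    (hqΔ : ∀ r, ∑ i, q r i = 1) : AffineIndependent ℝ (Fintype.linearCombination ℝ p ∘ q) := by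
  refine (affineIndependent_iff_of_fintype ℝ _).2 fun w hw hwp => ?_
  rw [Finset.weightedVSub_eq_linear_combination _ hw] at hwp
  refine Fintype.linearIndependent_iff.1 hq w (hp.eq_zero_of_linearCombination_eq_zero ?_ ?_)
  · simp only [Finset.sum_apply, Pi.smul_apply, smul_eq_mul]
    rw [Finset.sum_comm]
    simp [← Finset.mul_sum, hqΔ, hw]
  · simpa [map_sum] using hwp

end Barycentric

theorem affineFormsExtend_stdSimplex_inter_preimage {N : ℕ} {ι : Type*} [Fintype ι]
    {p : ι → Fin N → ℝ} (hp : AffineIndependent ℝ p) {C : Set (Fin N → ℝ)}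
    (hCT : C ⊆ convexHull ℝ (range p))
    (hlift : ∀ ω ∈ OmegaSet C, ∃ w ∈ OmegaSet (convexHull ℝ (range p)),
      ∀ (x : Fin N → ℝ) (hx : x ∈ C), w ⟨x, hCT hx⟩ = ω ⟨x, hx⟩) :
    AffineFormsExtend (stdSimplex ℝ ι ∩ Fintype.linearCombination ℝ p ⁻¹' C) := by
  set L := Fintype.linearCombination ℝ p
  set D := stdSimplex ℝ ι ∩ L ⁻¹' C
  intro c hc
  have hCD : ∀ y : C, ∃ x ∈ D, L x = y := fun y =>
    (image_stdSimplex_inter_preimage_linearCombination hCT).ge y.2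
  choose ξ hξD hξ using hCD
  have hξL : ∀ x (hx : x ∈ D), ξ ⟨L x, hx.2⟩ = x := fun x hx =>
    hp.injOn_linearCombination (hξD _).1 hx.1 (hξ _)
  have hξaff : ∀ (x y : C) (t : ℝ), t ∈ Icc (0 : ℝ) 1 → ∀ h, ξ ⟨t • x + (1 - t) • y, h⟩ =
      t • ξ x + (1 - t) • ξ y := fun x y t ht h =>
    hp.injOn_linearCombination (hξD _).1
      (convex_stdSimplex ℝ ι (hξD x).1 (hξD y).1 ht.1 (by linarith [ht.2]) (by ring))
      (by rw [hξ, map_add, map_smul, map_smul, hξ, hξ])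
  have hω : (fun y => c ⬝ᵥ ξ y) ∈ OmegaSet C :=
    ⟨fun x y t ht h => by
      simp only [hξaff x y t ht h, dotProduct_add, dotProduct_smul, smul_eq_mul],
      fun y => hc _ (hξD y)⟩
  obtain ⟨w, hw, hwC⟩ := hlift _ hω
  have hpT : ∀ i, p i ∈ convexHull ℝ (range p) := fun i => subset_convexHull ℝ _ (mem_range_self i)
  refine ⟨fun i => w ⟨p i, hpT i⟩, ⟨fun i => (hw.2 _).1, fun i => (hw.2 _).2⟩, fun x hx => ?_⟩
  calc (fun i => w ⟨p i, hpT i⟩) ⬝ᵥ x = w ⟨L x, hCT hx.2⟩ := by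
        rw [dotProduct_comm]
        exact (hw.1.map_sum (convex_convexHull ℝ _) Finset.univ (fun i => ⟨p i, hpT i⟩)
          (fun i _ => hx.1.1 i) hx.1.2 _).symm
    _ = c ⬝ᵥ ξ ⟨L x, hx.2⟩ := hwC _ hx.2
    _ = c ⬝ᵥ x := by rw [hξL x hx]

theorem section_with_full_pullback_is_simplex_general {N k : ℕ}
    (p : Fin k → (Fin N → ℝ)) (hp : AffineIndependent ℝ p)
    (T : Set (Fin N → ℝ)) (hT : T = convexHull ℝ (Set.range p))
    (C : Set (Fin N → ℝ)) (hCT : C ⊆ T) (hconv : Convex ℝ C)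
    (hcomp : IsCompact C)
    (hlift : ∀ ω ∈ OmegaSet C, ∃ w ∈ OmegaSet T,
      ∀ (x : Fin N → ℝ) (hx : x ∈ C), w ⟨x, hCT hx⟩ = ω ⟨x, hx⟩) :
    ∃ (j : ℕ) (q : Fin j → (Fin N → ℝ)),
      AffineIndependent ℝ q ∧ C = convexHull ℝ (Set.range q) := by
  subst hT
  set L := Fintype.linearCombination ℝ p
  set D := stdSimplex ℝ (Fin k) ∩ L ⁻¹' C
  have hDs : D ⊆ stdSimplex ℝ (Fin k) := inter_subset_left
  have hDconv : Convex ℝ D := (convex_stdSimplex ℝ _).inter (hconv.linear_preimage L)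
  have hDcl : IsClosed D := (isClosed_stdSimplex ℝ (Fin k)).inter
    (hcomp.isClosed.preimage L.continuous_of_finiteDimensional)
  have hD := affineFormsExtend_stdSimplex_inter_preimage hp hCT hlift
  have hdisj : (D.extremePoints ℝ).Pairwise (Disjoint on support) := fun u hu v hv huv =>
    hD.disjoint_support_of_mem_extremePoints hDs hDconv hDcl hu hv huv
  have hq0 : (0 : Fin k → ℝ) ∉ D.extremePoints ℝ := fun h => by simpa using (hDs h.1).2
  have hfin := Set.finite_of_pairwise_disjoint_support hq0 hdisj
  obtain ⟨n, q, hq⟩ := hfin.fin_embedding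
  have hqD : ∀ r, q r ∈ D.extremePoints ℝ := fun r => hq ▸ mem_range_self r
  refine ⟨n, L ∘ q, hp.linearCombination_comp ?_ fun r => (hDs (hqD r).1).2, ?_⟩
  · exact linearIndependent_of_pairwise_disjoint_support (fun r h => hq0 (h ▸ hqD r))
      fun r r' hrr' => hdisj (hqD r) (hqD r') (q.injective.ne hrr')
  · have hKM : convexHull ℝ (D.extremePoints ℝ) = D :=
      (hfin.isClosed_convexHull (𝕜 := ℝ)).closure_eq.symm.trans <| closure_convexHull_extremePoints
        ((isCompact_stdSimplex ℝ _).of_isClosed_subset hDcl hDs) hDconv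
    rw [range_comp, ← L.image_convexHull, hq, hKM,
      image_stdSimplex_inter_preimage_linearCombination hCT]

/-- if `C` is a compact convex subset of a simplex
`T = conv{p₁,…,p_k}` (with `p` affinely independent) such that every affine form
`ω ∈ Ω(C)` extends to an affine form `w ∈ Ω(T)` taking the same values on `C`
(in particular every extreme form of `Ω(C)` has a preimage under restriction),
then `C` is itself a simplex: the convex hull of affinely independent points. -/
theorem section_with_full_pullback_is_simplex {N k : ℕ}
    (p : Fin k → (Fin N → ℝ)) (hp : AffineIndependent ℝ p)
    (T : Set (Fin N → ℝ)) (hT : T = convexHull ℝ (Set.range p))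
    (C : Set (Fin N → ℝ)) (hCT : C ⊆ T) (hconv : Convex ℝ C)
    (hcomp : IsCompact C) (hne : C.Nonempty)
    (hlift : ∀ ω ∈ OmegaSet C, ∃ w ∈ OmegaSet T,
      ∀ (x : Fin N → ℝ) (hx : x ∈ C), w ⟨x, hCT hx⟩ = ω ⟨x, hx⟩) :
    ∃ (j : ℕ) (q : Fin j → (Fin N → ℝ)),
      AffineIndependent ℝ q ∧ C = convexHull ℝ (Set.range q) :=
  section_with_full_pullback_is_simplex_general p hp T hT C hCT hconv hcomp hlift
end

section
/- With the pentagon C and forms v₁,…,v₅ as above, the twelve forms {0, 1, v₁,…,v₅, 1−v₁,…,1−v₅} are pairwise distinct extreme points of Ω(C) (each nonconstant vᵢ attains both value 0 and value 1 on C). -/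
open Set

noncomputable def pentVertex (j : Fin 5) : Fin 2 → ℝ :=
  ![Real.cos (2 * Real.pi * (j : ℕ) / 5), Real.sin (2 * Real.pi * (j : ℕ) / 5)]

/-! A form `ω ∈ Ω(C)` is extreme as soon as the points where it takes the value `0` or `1` pin
down a form: in a proper decomposition `ω = a f + b g` the forms `f`, `g` must agree with `ω`
there. For `vᵢ` and `1 - vᵢ` these points include the vertices `sᵢ, sᵢ₊₂, sᵢ₊₃`. Forms in `Ω(C)`
are only affine along segments inside `C`, so the values at `sᵢ₊₁` and `sᵢ₊₄` are recovered from
the fact that the diagonals of the regular pentagon cut each other in the golden ratio.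
Distinctness of the twelve forms is read off their values at the vertices. -/

section Omega

variable {n : ℕ} {C : Set (Fin n → ℝ)}

namespace IsAffineOn

lemma sub {f g : C → ℝ} (hf : IsAffineOn C f) (hg : IsAffineOn C g) : IsAffineOn C (f - g) := by
  intro x y t ht h
  simp only [Pi.sub_apply, hf x y t ht h, hg x y t ht h]
  ring

lemma combo_eq (hC : Convex ℝ C) {f : C → ℝ} (hf : IsAffineOn C f) {x y z w : C} {a b : ℝ}
    (ha : 0 ≤ a) (hb : 0 ≤ b) (hab : a + b = 1)
    (h : a • (x : Fin n → ℝ) + b • (y : Fin n → ℝ) = a • (z : Fin n → ℝ) + b • (w : Fin n → ℝ)) :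
    a * f x + b * f y = a * f z + b * f w := by
  obtain rfl : b = 1 - a := by linarith
  have hxy : a • (x : Fin n → ℝ) + (1 - a) • (y : Fin n → ℝ) ∈ C := hC x.2 y.2 ha hb hab
  have hzw : a • (z : Fin n → ℝ) + (1 - a) • (w : Fin n → ℝ) ∈ C := h ▸ hxy
  have ha1 : a ∈ Icc (0 : ℝ) 1 := ⟨ha, by linarith⟩
  rw [← hf x y a ha1 hxy, ← hf z w a ha1 hzw]
  exact congrArg f (Subtype.ext h)

lemma eq_zero_of_convexHull {S : Set (Fin n → ℝ)} (hC : C = convexHull ℝ S) {f : C → ℝ}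
    (hf : IsAffineOn C f) (hS : ∀ x : C, x.1 ∈ S → f x = 0) (x : C) : f x = 0 := by
  have hconv : Convex ℝ C := hC ▸ convex_convexHull ℝ S
  suffices C ⊆ Subtype.val '' {y : C | f y = 0} by
    obtain ⟨y, hy, hyx⟩ := this x.2
    rwa [← Subtype.ext hyx]
  refine hC.subset.trans (convexHull_min (fun s hs ↦ ?_) ?_)
  · have hsC : s ∈ C := hC ▸ subset_convexHull ℝ S hs
    exact ⟨⟨s, hsC⟩, hS ⟨s, hsC⟩ hs, rfl⟩
  · rintro _ ⟨y, hy : f y = 0, rfl⟩ _ ⟨z, hz : f z = 0, rfl⟩ a b ha hb hab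
    obtain rfl : b = 1 - a := by linarith
    refine ⟨⟨_, hconv y.2 z.2 ha hb hab⟩, ?_, rfl⟩
    show f _ = 0
    rw [hf y z a ⟨ha, by linarith⟩, hy, hz]
    ring

end IsAffineOn

lemma const_mem_omegaSet {c : ℝ} (hc : c ∈ Icc (0 : ℝ) 1) : (fun _ : C ↦ c) ∈ OmegaSet C :=
  ⟨fun _ _ t _ _ ↦ by ring, fun _ ↦ hc⟩

lemma one_sub_mem_omegaSet {f : C → ℝ} (hf : f ∈ OmegaSet C) : (fun x ↦ 1 - f x) ∈ OmegaSet C := by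
  refine ⟨fun x y t ht h ↦ ?_, fun x ↦ ?_⟩
  · simp only [hf.1 x y t ht h]
    ring
  · obtain ⟨h0, h1⟩ := hf.2 x
    constructor <;> linarith

lemma AffineMap.restrict_mem_omegaSet {S : Set (Fin n → ℝ)} (hC : C = convexHull ℝ S)
    (φ : (Fin n → ℝ) →ᵃ[ℝ] ℝ) (hS : ∀ s ∈ S, φ s ∈ Icc (0 : ℝ) 1) :
    (fun x : C ↦ φ x) ∈ OmegaSet C := by
  refine ⟨fun x y t _ _ ↦ ?_, fun x ↦ ?_⟩
  · show φ _ = _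
    rw [Convex.combo_affine_apply (add_sub_cancel t 1)]
    rfl
  · have hx : φ x ∈ φ '' convexHull ℝ S := ⟨x, hC ▸ x.2, rfl⟩
    rw [φ.image_convexHull] at hx
    refine convexHull_min ?_ (convex_Icc 0 1) hx
    rintro _ ⟨s, hs, rfl⟩
    exact hS s hs

/-- Where `ω` takes the value `0` or `1`, every form of which `ω` is a proper convex combination
takes the same value. -/
lemma mem_extremePoints_omegaSet {ω : C → ℝ} (hω : ω ∈ OmegaSet C)
    (hpin : ∀ f ∈ OmegaSet C, ∀ g ∈ OmegaSet C,
      (∀ x, ω x = 0 ∨ ω x = 1 → f x = g x) → f = g) :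
    ω ∈ extremePoints ℝ (OmegaSet C) := by
  refine mem_extremePoints_iff_left.2 ⟨hω, fun f hf g hg ⟨a, b, ha, hb, hab, hfg⟩ ↦ ?_⟩
  have hω_eq (x : C) : a * f x + b * g x = ω x := congrFun hfg x
  obtain rfl : f = g := hpin f hf g hg fun x hx ↦ by
    have := hω_eq x
    obtain ⟨hf0, hf1⟩ := hf.2 x
    obtain ⟨hg0, hg1⟩ := hg.2 x
    rcases hx with hx | hx <;> nlinarith
  funext x
  rw [← hω_eq x, ← add_mul, hab, one_mul]

end Omega

open Real

local notation "γ" => (√5 - 1) / 2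

lemma sqrt_five_sub_one_div_two_mem_Ioo : γ ∈ Ioo (0 : ℝ) 1 := by
  have h1 : 1 < √5 := by rw [lt_sqrt] <;> norm_num
  have h3 : √5 < 3 := by rw [sqrt_lt'] <;> norm_num
  constructor <;> linarith

lemma cos_two_pi_div_five : cos (2 * π / 5) = (√5 - 1) / 4 := by
  rw [show 2 * π / 5 = 2 * (π / 5) by ring, cos_two_mul, cos_pi_div_five]
  linear_combination (1 / 8 : ℝ) * sq_sqrt (show (0 : ℝ) ≤ 5 by norm_num)

lemma pentVertex_add (i k : Fin 5) :
    pentVertex (i + k) =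
      ![cos (2 * π * (i : ℕ) / 5 + 2 * π * (k : ℕ) / 5),
        sin (2 * π * (i : ℕ) / 5 + 2 * π * (k : ℕ) / 5)] := by
  have hdiv : (((i + k : Fin 5) : ℕ) : ℝ) + 5 * (((i : ℕ) + k) / 5 : ℕ) = (i : ℕ) + (k : ℕ) := by
    rw [Fin.val_add]
    exact_mod_cast Nat.mod_add_div _ 5
  have hangle : 2 * π * (((i + k : Fin 5) : ℕ) : ℝ) / 5 =
      2 * π * (i : ℕ) / 5 + 2 * π * (k : ℕ) / 5 - (((i : ℕ) + k) / 5 : ℕ) * (2 * π) := by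
    linear_combination (2 * π / 5) * hdiv
  simp only [pentVertex, hangle, cos_sub_nat_mul_two_pi, sin_sub_nat_mul_two_pi]

/-- The diagonals `[sᵢ, sᵢ₊₂]` and `[sᵢ₊₃, sᵢ₊₁]` of the regular pentagon cross at the point
dividing both in the same ratio `γ : 1 - γ`. -/
lemma pentVertex_diagonal_combo (i : Fin 5) :
    (1 - γ) • pentVertex i + γ • pentVertex (i + 2) =
      (1 - γ) • pentVertex (i + 3) + γ • pentVertex (i + 1) := by
  set c := cos (2 * π / 5) with hc
  have hγ : γ = 2 * c := by rw [hc, cos_two_pi_div_five]; ring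
  have hquad : 4 * c ^ 2 + 2 * c - 1 = 0 := by
    rw [hc, cos_two_pi_div_five]
    linear_combination (1 / 4 : ℝ) * sq_sqrt (show (0 : ℝ) ≤ 5 by norm_num)
  have hc4 : cos (2 * π * 2 / 5) = 2 * c ^ 2 - 1 := by rw [← cos_two_mul]; ring_nf
  have hs4 : sin (2 * π * 2 / 5) = 2 * sin (2 * π / 5) * c := by rw [← sin_two_mul]; ring_nf
  have hc6 : cos (2 * π * 3 / 5) = 2 * c ^ 2 - 1 := by rw [← hc4, ← cos_two_pi_sub]; ring_nf
  have hs6 : sin (2 * π * 3 / 5) = -(2 * sin (2 * π / 5) * c) := by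
    rw [← hs4, ← sin_two_pi_sub]; ring_nf
  set θ := 2 * π * (i : ℕ) / 5
  have hx : (1 - 2 * c) * cos θ + 2 * c * cos (θ + 2 * π * 2 / 5) =
      (1 - 2 * c) * cos (θ + 2 * π * 3 / 5) + 2 * c * cos (θ + 2 * π / 5) := by
    rw [cos_add, cos_add, cos_add, hc4, hs4, hc6, hs6]
    linear_combination (2 * c - 2) * cos θ * hquad
  have hy : (1 - 2 * c) * sin θ + 2 * c * sin (θ + 2 * π * 2 / 5) =
      (1 - 2 * c) * sin (θ + 2 * π * 3 / 5) + 2 * c * sin (θ + 2 * π / 5) := by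
    rw [sin_add, sin_add, sin_add, hc4, hs4, hc6, hs6]
    linear_combination (2 * c - 2) * sin θ * hquad
  have h0 := pentVertex_add i 0
  rw [add_zero] at h0
  rw [hγ, h0, pentVertex_add i 1, pentVertex_add i 2, pentVertex_add i 3]
  ext j
  fin_cases j
  · simpa using hx
  · simpa using hy

abbrev pentagon : Set (Fin 2 → ℝ) := convexHull ℝ (range pentVertex)

noncomputable def pentPoint (k : Fin 5) : pentagon :=
  ⟨pentVertex k, subset_convexHull ℝ _ (mem_range_self k)⟩

/-- An affine form vanishing at three vertices `sᵢ, sᵢ₊₂, sᵢ₊₃` vanishes at `sᵢ₊₁` and then at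
`sᵢ₊₄` by the diagonal relation, hence on the whole pentagon. -/
lemma IsAffineOn.eq_zero_of_pentPoint {f : pentagon → ℝ} (hf : IsAffineOn pentagon f) (i : Fin 5)
    (h0 : f (pentPoint i) = 0) (h2 : f (pentPoint (i + 2)) = 0) (h3 : f (pentPoint (i + 3)) = 0)
    (x : pentagon) : f x = 0 := by
  obtain ⟨hγ0, hγ1⟩ := sqrt_five_sub_one_div_two_mem_Ioo
  have hcombo (j : Fin 5) := hf.combo_eq (convex_convexHull ℝ _) (x := pentPoint j)
    (y := pentPoint (j + 2)) (z := pentPoint (j + 3)) (w := pentPoint (j + 1))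
    (by linarith) hγ0.le (sub_add_cancel 1 γ) (pentVertex_diagonal_combo j)
  have h1 : f (pentPoint (i + 1)) = 0 := by
    have := hcombo i
    rw [h0, h2, h3] at this
    exact (mul_eq_zero.1 (by linarith)).resolve_left hγ0.ne'
  have h4 : f (pentPoint (i + 4)) = 0 := by
    have := hcombo (i + 3)
    rw [show i + 3 + 2 = i by grind, show i + 3 + 3 = i + 1 by grind,
      show i + 3 + 1 = i + 4 by grind, h0, h1, h3] at this
    exact (mul_eq_zero.1 (by linarith)).resolve_left hγ0.ne'
  have hall (k : Fin 5) : f (pentPoint k) = 0 := by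
    obtain ⟨d, rfl⟩ : ∃ d, k = i + d := ⟨k - i, by abel⟩
    fin_cases d
    exacts [by simpa using h0, h1, h2, h3, h4]
  refine hf.eq_zero_of_convexHull rfl (fun y ⟨k, hk⟩ ↦ ?_) x
  rw [show y = pentPoint k from Subtype.ext hk.symm]
  exact hall k

lemma mem_extremePoints_of_pentPoint {ω : pentagon → ℝ} (hω : ω ∈ OmegaSet pentagon) (i : Fin 5)
    (h0 : ω (pentPoint i) = 0 ∨ ω (pentPoint i) = 1)
    (h2 : ω (pentPoint (i + 2)) = 0 ∨ ω (pentPoint (i + 2)) = 1)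
    (h3 : ω (pentPoint (i + 3)) = 0 ∨ ω (pentPoint (i + 3)) = 1) :
    ω ∈ extremePoints ℝ (OmegaSet pentagon) := by
  refine mem_extremePoints_omegaSet hω fun f hf g hg hfg ↦ funext fun x ↦ ?_
  exact sub_eq_zero.1 <| (hf.1.sub hg.1).eq_zero_of_pentPoint i (sub_eq_zero.2 (hfg _ h0))
    (sub_eq_zero.2 (hfg _ h2)) (sub_eq_zero.2 (hfg _ h3)) x

lemma apply_eq_pattern {X : Type*} {x : Fin 5 → X} {v : Fin 5 → X → ℝ} {a b c : ℝ}
    (ha : ∀ i, v i (x i) = a) (hb : ∀ i, v i (x (i + 1)) = b ∧ v i (x (i + 4)) = b)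
    (hc : ∀ i, v i (x (i + 2)) = c ∧ v i (x (i + 3)) = c) (i k : Fin 5) :
    v i (x k) = ![a, b, c, c, b] (k - i) := by
  obtain ⟨d, rfl⟩ : ∃ d, k = i + d := ⟨k - i, by abel⟩
  rw [add_sub_cancel_left]
  fin_cases d
  exacts [by simpa using ha i, (hb i).1, (hc i).1, (hc i).2, (hb i).2]

lemma twelve_forms_injective {X : Type*} (x : Fin 5 → X) (v : Fin 5 → X → ℝ) {g : ℝ} (hg0 : g ≠ 0)
    (hg1 : g ≠ 1) (hv : ∀ i k, v i (x k) = ![1, g, 0, 0, g] (k - i)) :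
    Function.Injective ![fun _ ↦ 0, fun _ ↦ 1, v 0, v 1, v 2, v 3, v 4,
      fun y ↦ 1 - v 0 y, fun y ↦ 1 - v 1 y, fun y ↦ 1 - v 2 y, fun y ↦ 1 - v 3 y,
      fun y ↦ 1 - v 4 y] := by
  intro p q hpq
  have hk (k : Fin 5) := congrFun hpq (x k)
  fin_cases p <;> fin_cases q <;>
    simp [Fin.forall_fin_succ, hv, hg0, hg1, hg0.symm, hg1.symm, sub_eq_zero] at hk ⊢

/-- for the regular pentagon `C` with its five extreme forms `v₁,…,v₅`
(values `1, γ, 0, 0, γ` around the vertices, `γ = (√5-1)/2`), the twelve forms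
`{0, 1, v₁,…,v₅, 1-v₁,…,1-v₅}` are pairwise distinct extreme points of `Ω(C)`. -/
theorem pentagon_twelve_extreme_forms
    (C : Set (Fin 2 → ℝ)) (hC : C = convexHull ℝ (Set.range pentVertex))
    (v : Fin 5 → ((Fin 2 → ℝ) →ᵃ[ℝ] ℝ))
    (hv1 : ∀ i, v i (pentVertex i) = 1)
    (hvγ : ∀ i, v i (pentVertex (i + 1)) = (Real.sqrt 5 - 1) / 2
             ∧ v i (pentVertex (i + 4)) = (Real.sqrt 5 - 1) / 2)
    (hv0 : ∀ i, v i (pentVertex (i + 2)) = 0 ∧ v i (pentVertex (i + 3)) = 0) :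
    ∀ F : Fin 12 → (C → ℝ),
      F = ![(fun _ => 0), (fun _ => 1),
            (fun x => v 0 x.1), (fun x => v 1 x.1), (fun x => v 2 x.1),
            (fun x => v 3 x.1), (fun x => v 4 x.1),
            (fun x => 1 - v 0 x.1), (fun x => 1 - v 1 x.1), (fun x => 1 - v 2 x.1),
            (fun x => 1 - v 3 x.1), (fun x => 1 - v 4 x.1)] →
      Function.Injective F ∧ ∀ j, F j ∈ Set.extremePoints ℝ (OmegaSet C) := by
  intro F hF
  subst hC hF
  obtain ⟨hγ0, hγ1⟩ := sqrt_five_sub_one_div_two_mem_Ioo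
  have hval := apply_eq_pattern hv1 hvγ hv0
  have hmem (i : Fin 5) : (fun x : pentagon ↦ v i x.1) ∈ OmegaSet pentagon := by
    refine AffineMap.restrict_mem_omegaSet rfl (v i) ?_
    rintro _ ⟨k, rfl⟩
    rw [hval]
    generalize k - i = d
    fin_cases d <;> simp [hγ0.le, hγ1.le]
  have hconst {c : ℝ} (hc : c = 0 ∨ c = 1) :
      (fun _ : pentagon ↦ c) ∈ extremePoints ℝ (OmegaSet pentagon) :=
    mem_extremePoints_omegaSet (const_mem_omegaSet (by rcases hc with rfl | rfl <;> simp))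
      fun f _ g _ hfg ↦ funext fun x ↦ hfg x hc
  have hv (i : Fin 5) := mem_extremePoints_of_pentPoint (hmem i) i
    (.inr (hv1 i)) (.inl (hv0 i).1) (.inl (hv0 i).2)
  have hv' (i : Fin 5) := mem_extremePoints_of_pentPoint (one_sub_mem_omegaSet (hmem i)) i
    (.inl (sub_eq_zero.2 (hv1 i).symm)) (.inr (sub_eq_self.2 (hv0 i).1))
    (.inr (sub_eq_self.2 (hv0 i).2))
  refine ⟨twelve_forms_injective pentPoint (fun i x ↦ v i x.1) hγ0.ne' hγ1.ne hval, fun j ↦ ?_⟩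
  fin_cases j
  exacts [hconst (.inl rfl), hconst (.inr rfl), hv 0, hv 1, hv 2, hv 3, hv 4,
    hv' 0, hv' 1, hv' 2, hv' 3, hv' 4]
end
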